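/- Let p₁ and p₂ be probability measures on a measurable space Ω, let f : Ω → ℝ be measurable with 0 ≤ f(ω) ≤ 1 for all ω, and suppose ∫ f dp₁ ≥ 1 − δ and Var_{p₁}[f] ≤ ε, i.e. the counterfactual lies in the ⟨δ, ε⟩-set under p₁. Then simultaneously ∫ f dp₂ ≥ (1 − δ) − 2·√((1/2)·KL(p₂ ‖ p₁)) and Var_{p₂}[f] ≤ ε + 6·√((1/2)·KL(p₂ ‖ p₁)). (Combined guarantee of the paper's Theorems 1 and 2 for counterfactuals in the ⟨δ, ε⟩-set.) -/

import Mathlib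

/-!
Let `G = dp₂/dp₁` and `T = ∫ |G - 1| dp₁`. For every `g` with `|g| ≤ 1`,
`|∫ g dp₂ - ∫ g dp₁| = |∫ (G - 1) g dp₁| ≤ T`. Applied to `f` and `f²`, this moves the mean by at
most `T` and, since both means lie in `[0, 1]`, the variance by at most `3T`.

Pinsker's inequality `T² ≤ 2 KL(p₂ ‖ p₁)` turns this into the stated bounds. It follows by
integrating the pointwise bound `2t|x - 1| ≤ t²(x + 2) + (2/3)(x log x - x + 1)` at `x = G` and
taking `t = T/3`; the pointwise bound is AM–GM together with
`3(x - 1)² ≤ 2(x + 2)(x log x - x + 1)` for `x ≥ 0`.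
-/

open MeasureTheory ProbabilityTheory

open Classical in
/-- The Kullback–Leibler divergence `KL(p ‖ q) = ∫ log (dp/dq) dp` when `p ≪ q`
(and the log-likelihood ratio is integrable), and `+∞` otherwise. -/
noncomputable def klDiv {Ω : Type*} [MeasurableSpace Ω] (p q : Measure Ω) : EReal :=
  if p ≪ q ∧ Integrable (llr p q) p then ((∫ ω, llr p q ω ∂p : ℝ) : EReal) else ⊤

/-- The variance of `f` under the probability measure `p`:
`Var_p[f] = ∫ f² dp − (∫ f dp)²`. -/
noncomputable def var {Ω : Type*} [MeasurableSpace Ω] (p : Measure Ω) (f : Ω → ℝ) : ℝ :=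
  (∫ ω, (f ω) ^ 2 ∂p) - (∫ ω, f ω ∂p) ^ 2

open Real Set

lemma isMinOn_Ici_of_hasDerivAt {F F' : ℝ → ℝ} {a c : ℝ} (hac : a ≤ c)
    (hF : ContinuousOn F (Ici a)) (hF' : ∀ x ∈ Ioi a, HasDerivAt F (F' x) x)
    (hF'_nonpos : ∀ x ∈ Ioo a c, F' x ≤ 0) (hF'_nonneg : ∀ x ∈ Ioi c, 0 ≤ F' x) :
    IsMinOn F (Ici a) c := by
  have hanti : AntitoneOn F (Icc a c) := by
    refine antitoneOn_of_hasDerivWithinAt_nonpos (f' := F') (convex_Icc a c)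
      (hF.mono Icc_subset_Ici_self) ?_ ?_ <;> rw [interior_Icc]
    · exact fun x hx ↦ (hF' x hx.1).hasDerivWithinAt
    · exact hF'_nonpos
  have hmono : MonotoneOn F (Ici c) := by
    refine monotoneOn_of_hasDerivWithinAt_nonneg (f' := F') (convex_Ici c)
      (hF.mono (Ici_subset_Ici.mpr hac)) ?_ ?_ <;> rw [interior_Ici]
    · exact fun x hx ↦ (hF' x (hac.trans_lt hx)).hasDerivWithinAt
    · exact hF'_nonneg
  intro x hx
  rcases le_total x c with hxc | hcx
  · exact hanti ⟨hx, hxc⟩ ⟨hac, le_rfl⟩ hxc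
  · exact hmono (mem_Ici.mpr le_rfl) hcx hcx

lemma monotoneOn_add_one_mul_log_sub_two_mul :
    MonotoneOn (fun x : ℝ ↦ (x + 1) * log x - 2 * (x - 1)) (Ioi 0) := by
  have hderiv : ∀ x : ℝ, 0 < x → HasDerivAt (fun x : ℝ ↦ (x + 1) * log x - 2 * (x - 1))
      (log x + x⁻¹ - 1) x := fun x hx ↦
    ((((hasDerivAt_id x).add_const 1).mul (hasDerivAt_log hx.ne')).sub
      (((hasDerivAt_id x).sub_const 1).const_mul 2)).congr_deriv
      (by simp only [id]; field_simp; ring)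
  refine monotoneOn_of_hasDerivWithinAt_nonneg (f' := fun x ↦ log x + x⁻¹ - 1) (convex_Ioi 0)
    (fun x hx ↦ (hderiv x hx).continuousAt.continuousWithinAt) ?_ ?_ <;> rw [interior_Ioi]
  · exact fun x hx ↦ (hderiv x hx).hasDerivWithinAt
  · exact fun x hx ↦ by linarith [one_sub_inv_le_log_of_pos (mem_Ioi.mp hx)]

namespace MeasureTheory

lemma abs_integral_sub_integral_le_integral_abs_rnDeriv_sub_one {α : Type*}
    [MeasurableSpace α] {μ ν : Measure α} [IsFiniteMeasure μ] [IsFiniteMeasure ν] (hμν : μ ≪ ν)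
    {g : α → ℝ} (hg : AEStronglyMeasurable g ν) (hg_le : ∀ x, |g x| ≤ 1) :
    |∫ x, g x ∂μ - ∫ x, g x ∂ν| ≤ ∫ x, |(μ.rnDeriv ν x).toReal - 1| ∂ν := by
  have hg_int : Integrable g ν := .of_bound hg 1 (ae_of_all _ hg_le)
  have hGg_int : Integrable (fun x ↦ (μ.rnDeriv ν x).toReal • g x) ν :=
    (integrable_rnDeriv_smul_iff hμν).mpr (.of_bound (hg.mono_ac hμν) 1 (ae_of_all _ hg_le))
  rw [← integral_rnDeriv_smul hμν, ← integral_sub hGg_int hg_int, ← Real.norm_eq_abs]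
  refine norm_integral_le_of_norm_le
    ((Measure.integrable_toReal_rnDeriv (μ := μ) (ν := ν)).sub (integrable_const 1)).abs
    (ae_of_all _ fun x ↦ ?_)
  rw [smul_eq_mul, ← sub_one_mul, norm_mul, Real.norm_eq_abs, Real.norm_eq_abs]
  exact mul_le_of_le_one_right (abs_nonneg _) (hg_le x)

end MeasureTheory

namespace InformationTheory

lemma three_div_two_mul_sq_sub_one_le_klFun_mul {x : ℝ} (hx : 0 ≤ x) :
    3 / 2 * (x - 1) ^ 2 ≤ klFun x * (x + 2) := by
  set h : ℝ → ℝ := fun x ↦ (x + 1) * log x - 2 * (x - 1)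
  -- the derivative of the difference is `2 h`, and `h` increases through `h 1 = 0`
  have hmin : IsMinOn (fun x ↦ klFun x * (x + 2) - 3 / 2 * (x - 1) ^ 2) (Ici 0) 1 := by
    refine isMinOn_Ici_of_hasDerivAt zero_le_one (by fun_prop) (F' := fun x ↦ 2 * h x)
      (fun x hx ↦ ?_) (fun x hx ↦ ?_) (fun x hx ↦ ?_)
    · refine ((hasDerivAt_klFun (ne_of_gt hx)).mul ((hasDerivAt_id x).add_const 2)).sub
        ((((hasDerivAt_id x).sub_const 1).pow 2).const_mul (3 / 2)) |>.congr_deriv ?_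
      simp only [h, klFun_apply, id]
      ring
    · have := monotoneOn_add_one_mul_log_sub_two_mul hx.1 (mem_Ioi.mpr one_pos) hx.2.le
      norm_num [h] at this ⊢
      linarith
    · have := monotoneOn_add_one_mul_log_sub_two_mul (mem_Ioi.mpr one_pos)
        (mem_Ioi.mpr (one_pos.trans hx)) hx.le
      norm_num [h] at this ⊢
      linarith
  have := isMinOn_iff.mp hmin x (mem_Ici.mpr hx)
  simp only [klFun_one] at this
  linarith

lemma two_mul_mul_abs_sub_one_le_klFun {x : ℝ} (hx : 0 ≤ x) (t : ℝ) :
    2 * t * |x - 1| ≤ t ^ 2 * (x + 2) + 2 / 3 * klFun x := by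
  have h := three_div_two_mul_sq_sub_one_le_klFun_mul hx
  nlinarith [sq_nonneg (t * (x + 2) - |x - 1|), sq_abs (x - 1)]

theorem sq_integral_abs_rnDeriv_sub_one_le {α : Type*} [MeasurableSpace α] {μ ν : Measure α}
    [IsProbabilityMeasure μ] [IsProbabilityMeasure ν]
    (hμν : μ ≪ ν) (h_int : Integrable (llr μ ν) μ) :
    (∫ x, |(μ.rnDeriv ν x).toReal - 1| ∂ν) ^ 2 ≤ 2 * ∫ x, llr μ ν x ∂μ := by
  set G : α → ℝ := fun x ↦ (μ.rnDeriv ν x).toReal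
  set T := ∫ x, |G x - 1| ∂ν
  have hG_int : Integrable G ν := Measure.integrable_toReal_rnDeriv
  have hklFun_int : Integrable (fun x ↦ klFun (G x)) ν :=
    (integrable_klFun_rnDeriv_iff hμν).mpr h_int
  have hKL : ∫ x, klFun (G x) ∂ν = ∫ x, llr μ ν x ∂μ := by
    simp [G, integral_klFun_rnDeriv hμν h_int]
  have hbound (t : ℝ) : 2 * t * T ≤ 3 * t ^ 2 + 2 / 3 * ∫ x, llr μ ν x ∂μ := by
    have hlin_int : Integrable (fun x ↦ t ^ 2 * (G x + 2)) ν :=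
      (hG_int.add (integrable_const 2)).const_mul _
    calc 2 * t * T = ∫ x, 2 * t * |G x - 1| ∂ν := (integral_const_mul _ _).symm
      _ ≤ ∫ x, (t ^ 2 * (G x + 2) + 2 / 3 * klFun (G x)) ∂ν :=
        integral_mono ((hG_int.sub (integrable_const 1)).abs.const_mul _)
          (hlin_int.add (hklFun_int.const_mul _))
          fun x ↦ two_mul_mul_abs_sub_one_le_klFun ENNReal.toReal_nonneg t
      _ = 3 * t ^ 2 + 2 / 3 * ∫ x, llr μ ν x ∂μ := by
        rw [integral_add hlin_int (hklFun_int.const_mul _), integral_const_mul,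
          integral_const_mul, integral_add hG_int (integrable_const 2), hKL,
          Measure.integral_toReal_rnDeriv hμν]
        simp
        ring
  nlinarith [hbound (T / 3)]

end InformationTheory

section

variable {Ω : Type*} [MeasurableSpace Ω]

lemma klDiv_le_coe_iff {p q : Measure Ω} {K : ℝ} :
    klDiv p q ≤ K ↔ p ≪ q ∧ Integrable (llr p q) p ∧ ∫ ω, llr p q ω ∂p ≤ K := by
  unfold klDiv
  split_ifs with h
  · simp [h]
  · exact iff_of_false (by simp) fun h' ↦ h ⟨h'.1, h'.2.1⟩

lemma integral_mem_Icc_zero_one {p : Measure Ω} [IsProbabilityMeasure p] {f : Ω → ℝ}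
    (hf : ∀ ω, f ω ∈ Icc 0 1) : ∫ ω, f ω ∂p ∈ Icc 0 1 :=
  ⟨integral_nonneg fun ω ↦ (hf ω).1,
    (integral_mono_of_nonneg (ae_of_all p fun ω ↦ (hf ω).1) (integrable_const 1)
      (ae_of_all p fun ω ↦ (hf ω).2)).trans_eq (by simp)⟩

lemma var_le_var_add_three_mul {p q : Measure Ω} [IsProbabilityMeasure p]
    [IsProbabilityMeasure q] {f : Ω → ℝ} (hf : ∀ ω, f ω ∈ Icc 0 1) {T : ℝ}
    (hmean : |∫ ω, f ω ∂p - ∫ ω, f ω ∂q| ≤ T)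
    (hsq : |∫ ω, f ω ^ 2 ∂p - ∫ ω, f ω ^ 2 ∂q| ≤ T) :
    var p f ≤ var q f + 3 * T := by
  obtain ⟨hp₀, hp₁⟩ := integral_mem_Icc_zero_one (p := p) hf
  obtain ⟨hq₀, hq₁⟩ := integral_mem_Icc_zero_one (p := q) hf
  have hsq_mean : (∫ ω, f ω ∂q) ^ 2 - (∫ ω, f ω ∂p) ^ 2 ≤ 2 * T := by
    nlinarith [abs_le.mp hmean]
  unfold var
  linarith [(abs_le.mp hsq).2]

end

/-- Combined guarantee of the paper's Theorems 1 and 2 for counterfactuals in the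
`⟨δ, ε⟩`-set: if `∫ f dp₁ ≥ 1 − δ` (δ-safety) and `Var_{p₁}[f] ≤ ε` (ε-robustness), then
for any real `K` bounding `KL(p₂ ‖ p₁)`, simultaneously
`∫ f dp₂ ≥ (1 − δ) − 2·√((1/2)·K)` and `Var_{p₂}[f] ≤ ε + 6·√((1/2)·K)`. -/
theorem psce_delta_eps_set_guarantee {Ω : Type*} [MeasurableSpace Ω]
    (p₁ p₂ : Measure Ω) [IsProbabilityMeasure p₁] [IsProbabilityMeasure p₂]
    (f : Ω → ℝ) (hfm : Measurable f) (hf : ∀ ω, f ω ∈ Set.Icc (0 : ℝ) 1)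
    (δ ε : ℝ) (hδsafe : 1 - δ ≤ ∫ ω, f ω ∂p₁) (hεrobust : var p₁ f ≤ ε)
    (K : ℝ) (hK : klDiv p₂ p₁ ≤ (K : EReal)) :
    (1 - δ) - 2 * Real.sqrt (1 / 2 * K) ≤ ∫ ω, f ω ∂p₂ ∧
      var p₂ f ≤ ε + 6 * Real.sqrt (1 / 2 * K) := by
  obtain ⟨hac, hllr, hKL⟩ := klDiv_le_coe_iff.mp hK
  set T := ∫ ω, |(p₂.rnDeriv p₁ ω).toReal - 1| ∂p₁
  have hT : T ≤ 2 * √(1 / 2 * K) := by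
    have hT_sq := InformationTheory.sq_integral_abs_rnDeriv_sub_one_le hac hllr
    have : T / 2 ≤ √(1 / 2 * K) := le_sqrt_of_sq_le (by nlinarith)
    linarith
  have hf_abs (ω : Ω) : |f ω| ≤ 1 := abs_le.mpr ⟨by linarith [(hf ω).1], (hf ω).2⟩
  have hmean := abs_integral_sub_integral_le_integral_abs_rnDeriv_sub_one hac
    hfm.aestronglyMeasurable hf_abs
  have hsq := abs_integral_sub_integral_le_integral_abs_rnDeriv_sub_one hac
    (hfm.pow_const 2).aestronglyMeasurable fun ω ↦ by simpa [abs_pow] using hf_abs ω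
  exact ⟨by linarith [(abs_le.mp hmean).1], by linarith [var_le_var_add_three_mul hf hmean hsq]⟩
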